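/- arXiv:2112.09931 — 6 statements merged into one kernel-verified Lean document; each statement's English description precedes it below -/
import Mathlib

section
/- Let G be a finite simple graph with a proper 2-coloring of its vertices black and white, let V = V1 ⊔ V2 be a partition of its vertex set, and let E3 be the set of edges of G with one endpoint in V1 and one endpoint in V2. Assume every vertex of V1 incident to an edge of E3 is black, and let n be the number of black vertices of V1 minus the number of white vertices of V1. Then: if n ≥ 0, every perfect matching of G contains exactly n edges from E3; consequently, if n < 0, or if n exceeds the number of edges in E3, then G has no perfect matching. -/
/-- Key counting lemma: given a perfect matching, the number of black vertices of
`V1` equals the number of white vertices of `V1` plus the number of matching edges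
crossing from `V1` to its complement. -/
lemma graph_splitting_key {V : Type*} [Fintype V] (G : SimpleGraph V)
    (c : V → Bool)
    (hproper : ∀ v w : V, G.Adj v w → c v ≠ c w)
    (V1 : Set V)
    (hblack : ∀ v ∈ V1, ∀ w, w ∉ V1 → G.Adj v w → c v = true)
    (M : G.Subgraph) (hm : M.IsPerfectMatching) :
    ({v ∈ V1 | c v = true}).ncard
      = ({v ∈ V1 | c v = false}).ncard
        + (M.edgeSet ∩ {e ∈ G.edgeSet | ∃ v w, e = s(v, w) ∧ v ∈ V1 ∧ w ∉ V1}).ncard := by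
  rw [SimpleGraph.Subgraph.isPerfectMatching_iff] at hm
  -- partner function
  set p : V → V := fun v => (hm v).choose with hpdef
  have hp : ∀ v, M.Adj v (p v) := fun v => (hm v).choose_spec.1
  have hu : ∀ v w, M.Adj v w → w = p v := fun v w h => (hm v).choose_spec.2 w h
  have hpp : ∀ v, p (p v) = v := fun v => (hu (p v) v (hp v).symm).symm
  have hGadj : ∀ v, G.Adj v (p v) := fun v => M.adj_sub (hp v)
  set B := {v ∈ V1 | c v = true} with hB
  set W := {v ∈ V1 | c v = false} with hW
  set S := M.edgeSet ∩ {e ∈ G.edgeSet | ∃ v w, e = s(v, w) ∧ v ∈ V1 ∧ w ∉ V1} with hS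
  set Bin := {v ∈ B | p v ∈ V1} with hBin
  set Bout := {v ∈ B | p v ∉ V1} with hBout
  have hsplit : B = Bin ∪ Bout := by
    ext v; by_cases h : p v ∈ V1 <;> simp [hBin, hBout, hB, h]
  have hdisj : Disjoint Bin Bout := by
    rw [Set.disjoint_left]; rintro v ⟨_, h1⟩ ⟨_, h2⟩; exact h2 h1
  -- Bin ≃ W via p
  have hinjp : Set.InjOn p Set.univ := by
    intro a _ b _ h
    have := congrArg p h
    rwa [hpp, hpp] at this
  have himgW : p '' Bin = W := by
    ext w
    constructor
    · rintro ⟨v, ⟨⟨hv1, hvb⟩, hpv⟩, rfl⟩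
      refine ⟨hpv, ?_⟩
      have := hproper v (p v) (hGadj v)
      rw [hvb] at this
      simpa using Ne.symm this
    · rintro ⟨hw1, hwc⟩
      refine ⟨p w, ⟨⟨?_, ?_⟩, ?_⟩, hpp w⟩
      · by_contra hpw
        have := hblack w hw1 (p w) hpw (hGadj w)
        rw [this] at hwc; exact Bool.noConfusion hwc
      · have := hproper w (p w) (hGadj w)
        rw [hwc] at this
        simpa using Ne.symm this
      · rw [hpp]; exact hw1
  have hBinW : Bin.ncard = W.ncard := by
    rw [← himgW, Set.ncard_image_of_injOn (hinjp.mono (Set.subset_univ _))]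
  -- Bout ≃ S via v ↦ s(v, p v)
  have himgS : (fun v => s(v, p v)) '' Bout = S := by
    ext e
    constructor
    · rintro ⟨v, ⟨⟨hv1, hvb⟩, hpv⟩, rfl⟩
      exact ⟨SimpleGraph.Subgraph.mem_edgeSet.2 (hp v),
        (hGadj v), v, p v, rfl, hv1, hpv⟩
    · rintro ⟨he, -, v, w, rfl, hv1, hw1⟩
      have hadj : M.Adj v w := SimpleGraph.Subgraph.mem_edgeSet.1 he
      have hw : w = p v := hu v w hadj
      subst hw
      exact ⟨v, ⟨⟨hv1, hblack v hv1 (p v) hw1 (M.adj_sub hadj)⟩, hw1⟩, rfl⟩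
  have hinjS : Set.InjOn (fun v => s(v, p v)) Bout := by
    rintro a ⟨⟨ha1, -⟩, -⟩ b ⟨⟨hb1, -⟩, hbp⟩ h
    simp only [Sym2.eq_iff] at h
    rcases h with ⟨h, -⟩ | ⟨h, -⟩
    · exact h
    · exact (hbp (h ▸ ha1)).elim
  have hBoutS : Bout.ncard = S.ncard := by
    rw [← himgS, Set.ncard_image_of_injOn hinjS]
  rw [hsplit, Set.ncard_union_eq hdisj (Set.toFinite _) (Set.toFinite _), hBinW, hBoutS]

/-- the generalized Graph Splitting Lemma (edge-count part).
`c v = true` means `v` is colored black, `c v = false` means white.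
`V1` is one side of the vertex partition (so `V2 = V1ᶜ`), and the set
`{e ∈ G.edgeSet | ∃ v w, e = s(v,w) ∧ v ∈ V1 ∧ w ∉ V1}` is `E3`, the set of
edges of `G` with one endpoint in `V1` and one endpoint in `V2`. -/
theorem graph_splitting_edge_count {V : Type*} [Fintype V] (G : SimpleGraph V)
    (c : V → Bool)
    (hproper : ∀ v w : V, G.Adj v w → c v ≠ c w)
    (V1 : Set V)
    (hblack : ∀ v ∈ V1, ∀ w, w ∉ V1 → G.Adj v w → c v = true)
    (n : ℤ)
    (hn : n = ({v ∈ V1 | c v = true}.ncard : ℤ) - ({v ∈ V1 | c v = false}.ncard : ℤ)) :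
    (0 ≤ n → ∀ M : G.Subgraph, M.IsPerfectMatching →
        ((M.edgeSet ∩ {e ∈ G.edgeSet | ∃ v w, e = s(v, w) ∧ v ∈ V1 ∧ w ∉ V1}).ncard : ℤ)
          = n) ∧
    (n < 0 → ¬ ∃ M : G.Subgraph, M.IsPerfectMatching) ∧
    ((({e ∈ G.edgeSet | ∃ v w, e = s(v, w) ∧ v ∈ V1 ∧ w ∉ V1}).ncard : ℤ) < n →
        ¬ ∃ M : G.Subgraph, M.IsPerfectMatching) := by
  have key : ∀ M : G.Subgraph, M.IsPerfectMatching →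
      ((M.edgeSet ∩ {e ∈ G.edgeSet | ∃ v w, e = s(v, w) ∧ v ∈ V1 ∧ w ∉ V1}).ncard : ℤ) = n := by
    intro M hM
    have := graph_splitting_key G c hproper V1 hblack M hM
    rw [hn]
    omega
  refine ⟨fun _ => key, ?_, ?_⟩
  · rintro hneg ⟨M, hM⟩
    have := key M hM
    have h0 : (0 : ℤ) ≤ ((M.edgeSet ∩ {e ∈ G.edgeSet | ∃ v w, e = s(v, w) ∧ v ∈ V1 ∧ w ∉ V1}).ncard : ℤ) :=
      Int.ofNat_nonneg _
    omega
  · rintro hgt ⟨M, hM⟩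
    have hk := key M hM
    have hsub : (M.edgeSet ∩ {e ∈ G.edgeSet | ∃ v w, e = s(v, w) ∧ v ∈ V1 ∧ w ∉ V1})
        ⊆ {e ∈ G.edgeSet | ∃ v w, e = s(v, w) ∧ v ∈ V1 ∧ w ∉ V1} := Set.inter_subset_right
    have hle := Set.ncard_le_ncard hsub (Set.toFinite _)
    omega
end

section
/- Let G be a finite simple graph with a proper 2-coloring of its vertices black and white, let V = V1 ⊔ V2 be a partition of its vertex set, let G1 and G2 be the subgraphs of G induced on V1 and V2 respectively, and let E3 be the set of edges of G with one endpoint in V1 and one endpoint in V2. Assume every vertex of V1 incident to an edge of E3 is black, and assume the number of black vertices of V1 equals the number of white vertices of V1. Then the number of perfect matchings factorizes: M(G) = M(G1) · M(G2). -/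
/-!
Every white vertex of `V1` is matched to a black vertex of `V1`, since only black vertices of `V1`
have neighbours outside `V1`. The partner map thus injects the white vertices of `V1` into the
equally many black ones, so it is onto, and the black vertices of `V1` are matched inside `V1` too:
no perfect matching uses an edge between `V1` and `V2`. Restricting to the two sides and taking
unions is then a bijection between perfect matchings of `G` and pairs of perfect matchings of `G1`
and `G2`.
-/

namespace SimpleGraph.Subgraph

variable {V : Type*} {G : SimpleGraph V}

lemma IsMatching.adj_mem_of_forall_adj_mem {M : G.Subgraph} (hM : M.IsMatching) {A B : Set V}
    (hA : A ⊆ M.verts) (hB : B.Finite) (hcard : B.ncard ≤ A.ncard)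
    (hAB : ∀ a ∈ A, ∀ b, M.Adj a b → b ∈ B) {a b : V} (hb : b ∈ B) (hba : M.Adj b a) : a ∈ A := by
  have := hB.to_subtype
  choose partner hpartner using fun a : A => (hM (hA a.2)).exists
  let f : A → B := fun a => ⟨partner a, hAB a a.2 _ (hpartner a)⟩
  have hf : Function.Injective f := fun a a' h => by
    have : partner a = partner a' := congrArg Subtype.val h
    exact Subtype.ext <| hM.eq_of_adj_right (hpartner a) (this ▸ hpartner a')
  obtain ⟨a', ha'⟩ := (hf.bijective_of_nat_card_le (by simpa using hcard)).surjective ⟨b, hb⟩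
  have : partner a' = b := congrArg Subtype.val ha'
  exact hM.eq_of_adj_left (this ▸ (hpartner a').symm) hba ▸ a'.2

def NoEdgeCrosses (M : G.Subgraph) (s : Set V) : Prop :=
  ∀ ⦃v w⦄, M.Adj v w → (v ∈ s ↔ w ∈ s)

lemma NoEdgeCrosses.compl {M : G.Subgraph} {s : Set V} (h : M.NoEdgeCrosses s) :
    M.NoEdgeCrosses sᶜ :=
  fun _ _ hvw => not_congr (h hvw)

def splitAlong (s : Set V) :
    {M : G.Subgraph // M.NoEdgeCrosses s} ≃ (G.induce s).Subgraph × (G.induce sᶜ).Subgraph where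
  toFun M := (M.1.comap (Embedding.induce s).toHom, M.1.comap (Embedding.induce sᶜ).toHom)
  invFun M := ⟨M.1.map (Embedding.induce s).toHom ⊔ M.2.map (Embedding.induce sᶜ).toHom, by
    rintro _ _ (⟨a, b, -, rfl, rfl⟩ | ⟨a, b, -, rfl, rfl⟩)
    · exact iff_of_true a.2 b.2
    · exact iff_of_false a.2 b.2⟩
  left_inv := by
    rintro ⟨M, hM⟩
    ext v w
    · by_cases hv : v ∈ s <;> simp [hv]
    · by_cases hv : v ∈ s <;> simp [Relation.Map, hv] <;>
        exact ⟨fun h => h.1.2, fun h => ⟨⟨M.adj_sub h, h⟩, by simpa [hv] using hM h⟩⟩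
  right_inv := by
    rintro ⟨M₁, M₂⟩
    ext ⟨v, hv⟩ ⟨w, hw⟩
    · simp [hv]
    · simpa [Relation.Map, hv, hw] using fun h => M₁.adj_sub h
    · simp [Set.notMem_of_mem_compl hv]
    · simpa [Relation.Map, Set.notMem_of_mem_compl hv, Set.notMem_of_mem_compl hw]
        using fun h => M₂.adj_sub h

lemma IsPerfectMatching.comap_induce {M : G.Subgraph} (hM : M.IsPerfectMatching) {s : Set V}
    (hs : M.NoEdgeCrosses s) : (M.comap (Embedding.induce s).toHom).IsPerfectMatching := by
  refine isPerfectMatching_iff.mpr fun v => ?_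
  obtain ⟨w, hvw, huniq⟩ := isPerfectMatching_iff.mp hM v
  exact ⟨⟨w, (hs hvw).mp v.2⟩, ⟨M.adj_sub hvw, hvw⟩, fun u hu => Subtype.ext (huniq u hu.2)⟩

lemma IsPerfectMatching.sup_map_induce {s : Set V} {M₁ : (G.induce s).Subgraph}
    {M₂ : (G.induce sᶜ).Subgraph} (h₁ : M₁.IsPerfectMatching) (h₂ : M₂.IsPerfectMatching) :
    (M₁.map (Embedding.induce s).toHom ⊔ M₂.map (Embedding.induce sᶜ).toHom).IsPerfectMatching := by
  have hsupp₁ : (M₁.map (Embedding.induce s).toHom).support ⊆ s := fun v hv => by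
    obtain ⟨a, -, rfl⟩ := support_subset_verts _ hv
    exact a.2
  have hsupp₂ : (M₂.map (Embedding.induce sᶜ).toHom).support ⊆ sᶜ := fun v hv => by
    obtain ⟨a, -, rfl⟩ := support_subset_verts _ hv
    exact a.2
  refine ⟨(h₁.1.map _ (Embedding.induce (G := G) s).injective).sup
    (h₂.1.map _ (Embedding.induce (G := G) sᶜ).injective)
    (Set.disjoint_of_subset hsupp₁ hsupp₂ disjoint_compl_right), fun v => ?_⟩
  by_cases hv : v ∈ s
  · exact Or.inl ⟨⟨v, hv⟩, h₁.2 _, rfl⟩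
  · exact Or.inr ⟨⟨v, hv⟩, h₂.2 _, rfl⟩

theorem card_isPerfectMatching_eq_mul_of_noEdgeCrosses {s : Set V}
    (hs : ∀ M : G.Subgraph, M.IsPerfectMatching → M.NoEdgeCrosses s) :
    Nat.card {M : G.Subgraph // M.IsPerfectMatching} =
      Nat.card {M : (G.induce s).Subgraph // M.IsPerfectMatching} *
        Nat.card {M : (G.induce sᶜ).Subgraph // M.IsPerfectMatching} := by
  have hpm (M : {M : G.Subgraph // M.NoEdgeCrosses s}) : M.1.IsPerfectMatching ↔
      (splitAlong s M).1.IsPerfectMatching ∧ (splitAlong s M).2.IsPerfectMatching := by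
    refine ⟨fun h => ⟨h.comap_induce M.2, h.comap_induce M.2.compl⟩, fun h => ?_⟩
    rw [← (splitAlong s).symm_apply_apply M]
    exact h.1.sup_map_induce h.2
  rw [← Nat.card_prod]
  exact Nat.card_congr <| (Equiv.subtypeSubtypeEquivSubtype (hs _)).symm.trans <|
    ((splitAlong s).subtypeEquiv hpm).trans Equiv.subtypeProdEquivProd

lemma IsPerfectMatching.noEdgeCrosses_of_coloring [Finite V] {M : G.Subgraph}
    (hM : M.IsPerfectMatching) (c : V → Bool) (hproper : ∀ v w, G.Adj v w → c v ≠ c w)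
    {s : Set V} (hblack : ∀ v ∈ s, ∀ w, w ∉ s → G.Adj v w → c v = true)
    (hcard : {v ∈ s | c v = true}.ncard ≤ {v ∈ s | c v = false}.ncard) : M.NoEdgeCrosses s := by
  have hwhite : ∀ a ∈ {v ∈ s | c v = false}, ∀ b, M.Adj a b → b ∈ {v ∈ s | c v = true} := by
    rintro a ⟨has, hca⟩ b hab
    have hGab := M.adj_sub hab
    refine ⟨by_contra fun hbs => ?_, ?_⟩
    · simp [hblack a has b hbs hGab] at hca
    · simpa [hca] using (hproper a b hGab).symm
  have hstays : ∀ ⦃v w⦄, v ∈ s → M.Adj v w → w ∈ s := by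
    intro v w hv hvw
    cases hcv : c v
    · exact (hwhite v ⟨hv, hcv⟩ w hvw).1
    · exact (hM.1.adj_mem_of_forall_adj_mem (fun _ _ => hM.2 _) (Set.toFinite _) hcard hwhite
        ⟨hv, hcv⟩ hvw).1
  exact fun v w hvw => ⟨fun hv => hstays hv hvw, fun hw => hstays hw hvw.symm⟩

end SimpleGraph.Subgraph

/-- the `n = 0` case of the generalized Graph Splitting Lemma.
`c v = true` means `v` is colored black, `c v = false` means white.
`V1` is one side of the vertex partition and `V2 = V1ᶜ`; `G.induce V1` and
`G.induce V1ᶜ` are the induced subgraphs `G1` and `G2`.  If every vertex of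
`V1` incident to a crossing edge is black and `V1` has as many black vertices
as white vertices, then the number of perfect matchings factorizes:
`M(G) = M(G1) · M(G2)`. -/
theorem graph_splitting_factorization {V : Type*} [Fintype V] (G : SimpleGraph V)
    (c : V → Bool)
    (hproper : ∀ v w : V, G.Adj v w → c v ≠ c w)
    (V1 : Set V)
    (hblack : ∀ v ∈ V1, ∀ w, w ∉ V1 → G.Adj v w → c v = true)
    (hbalanced : {v ∈ V1 | c v = true}.ncard = {v ∈ V1 | c v = false}.ncard) :
    Nat.card {M : G.Subgraph // M.IsPerfectMatching} =
      Nat.card {M : (G.induce V1).Subgraph // M.IsPerfectMatching} *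
        Nat.card {M : (G.induce V1ᶜ).Subgraph // M.IsPerfectMatching} :=
  SimpleGraph.Subgraph.card_isPerfectMatching_eq_mul_of_noEdgeCrosses fun _ hM =>
    hM.noEdgeCrosses_of_coloring c hproper hblack hbalanced.le
end

section
/- Fix natural numbers b, n and a strictly increasing sequence of integers u_1 < u_2 < ... < u_n with 1 ≤ u_i ≤ b+2n and 2i ≤ u_i for all i. The entries of M_{b,n,u}(a) and of M̄_{b,n,u}(a) are polynomials in a with rational coefficients, and as an identity of polynomials in a (equivalently, for every rational value of a): det M̄_{b,n,u}(a) = det M_{b,n,u}(a − 1/2). (Equivalently, the weighted and unweighted tiling functions satisfy f̄⁺_{b,n,(u_i)}(a) = f⁺_{b,n,(u_i)}(a − 1/2).) -/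
open Polynomial Finset

/-- Generalized binomial coefficient `C(x, k) = (1/k!) · (x-k+1)_k` for `k ≥ 0`,
and `C(x, k) = 0` for `k < 0`. -/
noncomputable def genBinom (x : ℚ) (k : ℤ) : ℚ :=
  if 0 ≤ k then (ascPochhammer ℚ k.toNat).eval (x - k + 1) / (k.toNat.factorial : ℚ)
  else 0

/-- The path matrix `M_{b,n,u}(a)` of the region `V⁺_{a,b,n,(u_i)}`: the `(i,j)` entry
(1-based) is `C(T(i,j), K(i,j))`, where `T(i,j) = a+n+j`, `K(i,j) = 2j-1-b+i` if
`1 ≤ i ≤ b`, and `T(i,j) = a+u_{i-b}-b-n+j-1`, `K(i,j) = 2j-1-2b-2n+u_{i-b}` if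
`b+1 ≤ i ≤ b+n`.  The dent positions are `u 1, …, u n` (1-based). -/
noncomputable def MMat (b n : ℕ) (u : ℕ → ℤ) (a : ℚ) :
    Matrix (Fin (b + n)) (Fin (b + n)) ℚ := fun i j =>
  if ((i : ℕ) + 1 : ℤ) ≤ (b : ℤ) then
    genBinom (a + (n : ℚ) + (((j : ℕ) : ℚ) + 1))
      (2 * (((j : ℕ) : ℤ) + 1) - 1 - (b : ℤ) + (((i : ℕ) : ℤ) + 1))
  else
    genBinom (a + ((u ((i : ℕ) + 1 - b) : ℤ) : ℚ) - (b : ℚ) - (n : ℚ) + (((j : ℕ) : ℚ) + 1) - 1)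
      (2 * (((j : ℕ) : ℤ) + 1) - 1 - 2 * (b : ℤ) - 2 * (n : ℤ) + u ((i : ℕ) + 1 - b))

/-- The weighted path matrix `M̄_{b,n,u}(a)` of the region `V̄⁺_{a,b,n,(u_i)}`
(vertical lozenges along the eastern boundary have weight `1/2`): the `(i,j)` entry
is `C(T(i,j)-1, K(i,j)) + (1/2)·C(T(i,j)-1, K(i,j)-1)` with `T, K` as in `MMat`. -/
noncomputable def MbarMat (b n : ℕ) (u : ℕ → ℤ) (a : ℚ) :
    Matrix (Fin (b + n)) (Fin (b + n)) ℚ := fun i j =>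
  if ((i : ℕ) + 1 : ℤ) ≤ (b : ℤ) then
    genBinom (a + (n : ℚ) + (((j : ℕ) : ℚ) + 1) - 1)
        (2 * (((j : ℕ) : ℤ) + 1) - 1 - (b : ℤ) + (((i : ℕ) : ℤ) + 1)) +
      (1 / 2) * genBinom (a + (n : ℚ) + (((j : ℕ) : ℚ) + 1) - 1)
        (2 * (((j : ℕ) : ℤ) + 1) - 1 - (b : ℤ) + (((i : ℕ) : ℤ) + 1) - 1)
  else
    genBinom (a + ((u ((i : ℕ) + 1 - b) : ℤ) : ℚ) - (b : ℚ) - (n : ℚ) + (((j : ℕ) : ℚ) + 1) - 1 - 1)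
        (2 * (((j : ℕ) : ℤ) + 1) - 1 - 2 * (b : ℤ) - 2 * (n : ℤ) + u ((i : ℕ) + 1 - b)) +
      (1 / 2) * genBinom
        (a + ((u ((i : ℕ) + 1 - b) : ℤ) : ℚ) - (b : ℚ) - (n : ℚ) + (((j : ℕ) : ℚ) + 1) - 1 - 1)
        (2 * (((j : ℕ) : ℤ) + 1) - 1 - 2 * (b : ℤ) - 2 * (n : ℤ) + u ((i : ℕ) + 1 - b) - 1)

/-!
The weighted matrix factors as `M̄(a) = M(a - 1/2) · G` with `G` upper unitriangular, so the
determinants agree.  `G` is the Toeplitz matrix of `γ_m = C(1/2, m) / 4^m`, the coefficients of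
`(1 + s/4)^{1/2}`, and the factorization is, entry by entry, the identity
`∑_m γ_m C(x - 1/2 - m, k - 2m) = C(x - 1, k) + ½ C(x - 1, k - 1)` (for `k < 2N`, so that no
term is cut off), i.e. `(1+t)^{x-1/2} (1 + t²/(4(1+t)))^{1/2} = (1+t)^{x-1} (1 + t/2)`.
Vandermonde convolution in `x` reduces it to `x = 1`, where the summand `s_m` is hypergeometric
in `m` and Gosper's algorithm supplies the telescoping certificate
`r(r-1) ∑_{m<M} s_m = -2M(2r-2M-1) s_M`.
-/

theorem genBinom_of_neg (x : ℚ) {k : ℤ} (hk : k < 0) : genBinom x k = 0 := by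
  simp [genBinom, not_le.2 hk]

theorem genBinom_natCast (x : ℚ) (n : ℕ) : genBinom x n = Ring.choose x n := by
  rw [genBinom, if_pos n.cast_nonneg, Int.toNat_natCast, Ring.choose,
    ← Polynomial.ascPochhammer_smeval_eq_eval,
    ← Ring.factorial_nsmul_multichoose_eq_ascPochhammer,
    nsmul_eq_mul, mul_div_cancel_left₀ _ (by exact_mod_cast n.factorial_ne_zero)]
  push_cast
  ring_nf

theorem genBinom_mul_self_eq_mul_genBinom_pred_pred (x : ℚ) (k : ℤ) :
    genBinom x k * k = x * genBinom (x - 1) (k - 1) := by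
  rcases lt_trichotomy k 0 with hk | rfl | hk
  · simp [genBinom_of_neg _ hk, genBinom_of_neg _ (show k - 1 < 0 by omega)]
  · simp [genBinom_of_neg _ (show (-1 : ℤ) < 0 by norm_num)]
  · obtain ⟨t, rfl⟩ : ∃ t : ℕ, k = t + 1 := ⟨(k - 1).toNat, by omega⟩
    have h := Ring.choose_smul_choose x (Nat.le_add_left 1 t)
    rw [Nat.choose_one_right, Ring.choose_one_right, Nat.add_sub_cancel, nsmul_eq_mul] at h
    rw [add_sub_cancel_right, ← Nat.cast_one, ← Nat.cast_add, genBinom_natCast,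
      genBinom_natCast]
    push_cast at h ⊢
    linear_combination h

theorem genBinom_zero_left {k : ℤ} (hk : k ≠ 0) : genBinom 0 k = 0 := by
  have h := genBinom_mul_self_eq_mul_genBinom_pred_pred 0 k
  rw [zero_mul] at h
  exact (mul_eq_zero.1 h).resolve_right (by exact_mod_cast hk)

theorem genBinom_mul_self_eq_genBinom_pred_mul (x : ℚ) (k : ℤ) :
    genBinom x k * k = genBinom x (k - 1) * (x - k + 1) := by
  rcases lt_trichotomy k 0 with hk | rfl | hk
  · simp [genBinom_of_neg _ hk, genBinom_of_neg _ (show k - 1 < 0 by omega)]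
  · simp [genBinom_of_neg _ (show (-1 : ℤ) < 0 by norm_num)]
  · obtain ⟨t, rfl⟩ : ∃ t : ℕ, k = t + 1 := ⟨(k - 1).toNat, by omega⟩
    have h := Ring.choose_smul_choose x (Nat.le_succ t)
    rw [Nat.choose_succ_self_right, Nat.succ_sub (le_refl t), Nat.sub_self, Ring.choose_one_right,
      nsmul_eq_mul] at h
    rw [add_sub_cancel_right, ← Nat.cast_one, ← Nat.cast_add, genBinom_natCast,
      genBinom_natCast]
    push_cast at h ⊢
    linear_combination h

theorem genBinom_add_eq_sum (y z : ℚ) {q : ℤ} {K : ℕ} (hq : q ≤ K) :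
    genBinom (y + z) q = ∑ i ∈ range (K + 1), genBinom y i * genBinom z (q - i) := by
  rcases lt_or_ge q 0 with hq0 | hq0
  · rw [genBinom_of_neg _ hq0]
    exact (sum_eq_zero fun i _ => by rw [genBinom_of_neg z (by omega), mul_zero]).symm
  obtain ⟨p, rfl⟩ : ∃ p : ℕ, q = p := ⟨q.toNat, by omega⟩
  rw [genBinom_natCast, Ring.add_choose_eq p (Commute.all y z),
    Nat.sum_antidiagonal_eq_sum_range_succ_mk,
    ← sum_subset (range_subset_range.2 (by omega : p + 1 ≤ K + 1))]
  · refine sum_congr rfl fun i hi => ?_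
    rw [← Nat.cast_sub (by simpa [Nat.lt_succ_iff] using hi), genBinom_natCast, genBinom_natCast]
  · intro i _ hi
    rw [genBinom_of_neg z (by simp only [mem_range, Order.lt_add_one_iff, not_le] at hi; omega),
      mul_zero]

noncomputable def sqrtCoeff (m : ℕ) : ℚ := genBinom (1 / 2) m / 4 ^ m

theorem sqrtCoeff_zero : sqrtCoeff 0 = 1 := by
  simp [sqrtCoeff, genBinom]

section SqrtCoeffTerm

variable (r : ℤ)

noncomputable def sqrtCoeffTerm (m : ℕ) : ℚ := sqrtCoeff m * genBinom (1 / 2 - m) (r - 2 * m)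

theorem sqrtCoeffTerm_succ (m : ℕ) :
    2 * (m + 1) * (2 * m + 3 - 2 * r) * sqrtCoeffTerm r (m + 1)
      = (r - 2 * m) * (r - 2 * m - 1) * sqrtCoeffTerm r m := by
  have h1 := genBinom_mul_self_eq_genBinom_pred_mul (1 / 2) ((m : ℤ) + 1)
  have h2 := genBinom_mul_self_eq_mul_genBinom_pred_pred (1 / 2 - m) (r - 2 * m)
  have h3 := genBinom_mul_self_eq_genBinom_pred_mul (1 / 2 - m - 1) (r - 2 * m - 1)
  have e1 : (1 / 2 : ℚ) - ((m + 1 : ℕ) : ℚ) = 1 / 2 - m - 1 := by push_cast; ring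
  have e2 : r - 2 * ((m + 1 : ℕ) : ℤ) = r - 2 * m - 1 - 1 := by push_cast; ring
  simp only [sqrtCoeffTerm, sqrtCoeff, e1, e2]
  push_cast at h1 h2 h3 ⊢
  simp only [add_sub_cancel_right] at h1
  set y : ℚ := 1 / 2 - m
  linear_combination ((y - (r - 2 * m) + 1) * genBinom (y - 1) (r - 2 * m - 1 - 1) / 4 ^ m) * h1
    - (genBinom (1 / 2) m * y / 4 ^ m) * h3 - (genBinom (1 / 2) m * (r - 2 * m - 1) / 4 ^ m) * h2

theorem mul_sum_range_sqrtCoeffTerm (M : ℕ) :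
    r * (r - 1) * ∑ m ∈ range M, sqrtCoeffTerm r m
      = -2 * M * (2 * r - 2 * M - 1) * sqrtCoeffTerm r M := by
  induction M with
  | zero => simp
  | succ M ih =>
    rw [sum_range_succ, mul_add, ih]
    push_cast
    linear_combination -sqrtCoeffTerm_succ r M

theorem sqrtCoeffTerm_of_lt {m : ℕ} (hm : r < 2 * m) : sqrtCoeffTerm r m = 0 := by
  rw [sqrtCoeffTerm, genBinom_of_neg _ (by omega), mul_zero]

theorem sum_range_sqrtCoeffTerm {N : ℕ} (hN : r < 2 * N) :
    ∑ m ∈ range N, sqrtCoeffTerm r m = genBinom 0 r + 1 / 2 * genBinom 0 (r - 1) := by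
  rcases lt_or_ge r 2 with hr | hr
  · rw [sum_eq_single 0 (fun m _ hm => sqrtCoeffTerm_of_lt r (by omega))
      (fun h0 => sqrtCoeffTerm_of_lt r
        (by rw [mem_range, not_lt, nonpos_iff_eq_zero] at h0; omega))]
    rcases lt_trichotomy r 0 with hr0 | rfl | hr0
    · simp [sqrtCoeffTerm, genBinom_of_neg _ hr0, genBinom_of_neg _ (show r - 1 < 0 by omega)]
    · simp [sqrtCoeffTerm, sqrtCoeff_zero, genBinom]
    · obtain rfl : r = 1 := by omega
      simp [sqrtCoeffTerm, sqrtCoeff_zero, genBinom]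
  · have hne : (r : ℚ) * (r - 1) ≠ 0 := by
      have : (2 : ℚ) ≤ r := by exact_mod_cast hr
      exact mul_ne_zero (by linarith) (by linarith)
    have h := mul_sum_range_sqrtCoeffTerm r N
    rw [sqrtCoeffTerm_of_lt r hN, mul_zero] at h
    rw [(mul_eq_zero.1 h).resolve_left hne, genBinom_zero_left (by omega),
      genBinom_zero_left (by omega)]
    ring

end SqrtCoeffTerm

theorem sum_sqrtCoeff_mul_genBinom (x : ℚ) {k : ℤ} {N : ℕ} (hk : k < 2 * N) :
    ∑ m ∈ range N, sqrtCoeff m * genBinom (x - 1 / 2 - m) (k - 2 * m)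
      = genBinom (x - 1) k + 1 / 2 * genBinom (x - 1) (k - 1) := by
  have hkK : k ≤ k.toNat := Int.self_le_toNat k
  calc ∑ m ∈ range N, sqrtCoeff m * genBinom (x - 1 / 2 - m) (k - 2 * m)
      = ∑ m ∈ range N, ∑ i ∈ range (k.toNat + 1),
          genBinom (x - 1) i * sqrtCoeffTerm (k - i) m := by
        refine sum_congr rfl fun m _ => ?_
        have e : x - 1 / 2 - m = (x - 1) + (1 / 2 - m) := by ring
        rw [e, genBinom_add_eq_sum _ _ (show k - 2 * m ≤ k.toNat by omega), mul_sum]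
        refine sum_congr rfl fun i _ => ?_
        have e' : k - 2 * m - i = k - i - 2 * m := by ring
        rw [sqrtCoeffTerm, e', mul_left_comm]
    _ = ∑ i ∈ range (k.toNat + 1),
          genBinom (x - 1) i * (genBinom 0 (k - i) + 1 / 2 * genBinom 0 (k - 1 - i)) := by
        rw [sum_comm]
        refine sum_congr rfl fun i _ => ?_
        have e : k - i - 1 = k - 1 - i := by ring
        rw [← mul_sum, sum_range_sqrtCoeffTerm _ (by omega), e]
    _ = genBinom (x - 1) k + 1 / 2 * genBinom (x - 1) (k - 1) := by
        have h0 := genBinom_add_eq_sum (x - 1) 0 hkK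
        have h1 := genBinom_add_eq_sum (x - 1) 0 (show k - 1 ≤ k.toNat by omega)
        rw [add_zero] at h0 h1
        rw [h0, h1, mul_sum, ← sum_add_distrib]
        refine sum_congr rfl fun i _ => ?_
        ring

noncomputable def sqrtCoeffMatrix (N : ℕ) : Matrix (Fin N) (Fin N) ℚ :=
  fun p q => if p ≤ q then sqrtCoeff (q - p) else 0

theorem det_sqrtCoeffMatrix (N : ℕ) : (sqrtCoeffMatrix N).det = 1 := by
  rw [Matrix.det_of_isUpperTriangular (M := sqrtCoeffMatrix N) fun p q h => if_neg (not_le.2 h)]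
  simp [sqrtCoeffMatrix, sqrtCoeff_zero]

theorem sum_genBinom_mul_sqrtCoeffMatrix {N : ℕ} (y : ℚ) {d : ℤ} (hd : d ≤ 1) (j : Fin N) :
    ∑ q : Fin N, genBinom (y + (q : ℕ)) (2 * (q : ℕ) + d) * sqrtCoeffMatrix N q j
      = genBinom (y + (j : ℕ) - 1 / 2) (2 * (j : ℕ) + d)
        + 1 / 2 * genBinom (y + (j : ℕ) - 1 / 2) (2 * (j : ℕ) + d - 1) := by
  let f : ℕ → ℚ := fun q => genBinom (y + q) (2 * q + d)
  calc ∑ q : Fin N, genBinom (y + (q : ℕ)) (2 * (q : ℕ) + d) * sqrtCoeffMatrix N q j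
      = ∑ q ∈ (range N).filter (· ≤ (j : ℕ)), f q * sqrtCoeff (j - q) := by
        rw [sum_filter, ← Fin.sum_univ_eq_sum_range]
        refine sum_congr rfl fun q _ => ?_
        simp only [sqrtCoeffMatrix, Fin.le_def, f]
        split_ifs <;> simp
    _ = ∑ m ∈ range (j + 1), sqrtCoeff m * f (j - m) := by
        have hfilter : (range N).filter (· ≤ (j : ℕ)) = range (j + 1) := by
          ext q
          simp only [mem_filter, mem_range, Order.lt_add_one_iff, and_iff_right_iff_imp]
          omega
        rw [hfilter, ← sum_range_reflect]
        refine sum_congr rfl fun m hm => ?_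
        rw [Nat.add_sub_cancel, Nat.sub_sub_self (by simpa [Nat.lt_succ_iff] using hm), mul_comm]
    _ = _ := by
        rw [show y + (j : ℕ) - 1 / 2 = y + (j : ℕ) + 1 / 2 - 1 by ring,
          ← sum_sqrtCoeff_mul_genBinom (y + (j : ℕ) + 1 / 2) (N := j + 1) (by push_cast; omega)]
        refine sum_congr rfl fun m hm => ?_
        simp only [f]
        push_cast [Nat.cast_sub (Nat.lt_succ_iff.1 (mem_range.1 hm))]
        ring_nf

section PathMatrix

variable {ι : Type*} (N : ℕ) (c : ι → ℚ) (d : ι → ℤ)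

noncomputable def binomPathMatrix (a : ℚ) : Matrix ι (Fin N) ℚ :=
  fun i j => genBinom (a + c i + (j : ℕ)) (2 * (j : ℕ) + d i)

noncomputable def weightedBinomPathMatrix (a : ℚ) : Matrix ι (Fin N) ℚ :=
  fun i j => genBinom (a + c i + (j : ℕ) - 1) (2 * (j : ℕ) + d i)
    + 1 / 2 * genBinom (a + c i + (j : ℕ) - 1) (2 * (j : ℕ) + d i - 1)

theorem weightedBinomPathMatrix_eq_mul {d : ι → ℤ} (hd : ∀ i, d i ≤ 1) (a : ℚ) :
    weightedBinomPathMatrix N c d a = binomPathMatrix N c d (a - 1 / 2) * sqrtCoeffMatrix N := by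
  ext i j
  simp only [Matrix.mul_apply, weightedBinomPathMatrix, binomPathMatrix]
  rw [sum_genBinom_mul_sqrtCoeffMatrix (a - 1 / 2 + c i) (hd i) j,
    show a - 1 / 2 + c i + (j : ℕ) - 1 / 2 = a + c i + (j : ℕ) - 1 by ring]

end PathMatrix

/-- With `0`-based `j`, the entries of `MMat` and `MbarMat` have `T(i,j) = a + pathRowShift i + j`
and `K(i,j) = 2j + pathRowOffset i`. -/
noncomputable def pathRowShift (b n : ℕ) (u : ℕ → ℤ) (i : Fin (b + n)) : ℚ :=
  if ((i : ℕ) + 1 : ℤ) ≤ (b : ℤ) then n + 1 else u ((i : ℕ) + 1 - b) - b - n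

def pathRowOffset (b n : ℕ) (u : ℕ → ℤ) (i : Fin (b + n)) : ℤ :=
  if ((i : ℕ) + 1 : ℤ) ≤ (b : ℤ) then (i : ℕ) + 2 - b
  else u ((i : ℕ) + 1 - b) + 1 - 2 * b - 2 * n

theorem MMat_eq_binomPathMatrix (b n : ℕ) (u : ℕ → ℤ) (a : ℚ) :
    MMat b n u a = binomPathMatrix (b + n) (pathRowShift b n u) (pathRowOffset b n u) a := by
  ext i j
  simp only [MMat, binomPathMatrix, pathRowShift, pathRowOffset]
  split_ifs <;> congr 1 <;> ring

theorem MbarMat_eq_weightedBinomPathMatrix (b n : ℕ) (u : ℕ → ℤ) (a : ℚ) :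
    MbarMat b n u a
      = weightedBinomPathMatrix (b + n) (pathRowShift b n u) (pathRowOffset b n u) a := by
  ext i j
  simp only [MbarMat, weightedBinomPathMatrix, pathRowShift, pathRowOffset]
  split_ifs <;>
    exact congrArg₂ (· + 1 / 2 * ·) (congrArg₂ genBinom (by ring) (by ring))
      (congrArg₂ genBinom (by ring) (by ring))

theorem pathRowOffset_le_one {b n : ℕ} {u : ℕ → ℤ}
    (hu : ∀ i, 1 ≤ i → i ≤ n → u i ≤ 2 * b + 2 * n) (i : Fin (b + n)) :
    pathRowOffset b n u i ≤ 1 := by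
  unfold pathRowOffset
  split_ifs with h
  · omega
  · have := hu ((i : ℕ) + 1 - b) (by omega) (by omega)
    omega

theorem weighted_equals_shifted_unweighted_general (b n : ℕ) (u : ℕ → ℤ)
    (hub : ∀ i, 1 ≤ i → i ≤ n → u i ≤ (b : ℤ) + 2 * n) :
    ∀ a : ℚ, (MbarMat b n u a).det = (MMat b n u (a - 1 / 2)).det := by
  intro a
  have hoffset : ∀ i, pathRowOffset b n u i ≤ 1 :=
    pathRowOffset_le_one fun i hi hin => (hub i hi hin).trans (by omega)
  rw [MbarMat_eq_weightedBinomPathMatrix, weightedBinomPathMatrix_eq_mul _ _ hoffset,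
    Matrix.det_mul, det_sqrtCoeffMatrix, mul_one, MMat_eq_binomPathMatrix]

/-- the entries of `M_{b,n,u}` and `M̄_{b,n,u}` are polynomial functions
of `a`, and as an identity of polynomials in `a` — equivalently, for every rational
value of `a` — the weighted and unweighted tiling functions satisfy
`det M̄_{b,n,u}(a) = det M_{b,n,u}(a - 1/2)`. -/
theorem weighted_equals_shifted_unweighted (b n : ℕ) (u : ℕ → ℤ)
    (hmono : ∀ i j, 1 ≤ i → i < j → j ≤ n → u i < u j)
    (hlb : ∀ i, 1 ≤ i → i ≤ n → 1 ≤ u i)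
    (hub : ∀ i, 1 ≤ i → i ≤ n → u i ≤ (b : ℤ) + 2 * n)
    (hdents : ∀ i, 1 ≤ i → i ≤ n → 2 * (i : ℤ) ≤ u i) :
    ∀ a : ℚ, (MbarMat b n u a).det = (MMat b n u (a - 1 / 2)).det :=
  weighted_equals_shifted_unweighted_general b n u hub
end

section
/- For every natural number b ≥ 1 there exists a nonzero rational constant c, depending only on b, such that for every rational number a with (2a)_b ≠ 0: P_|(a − 1/2, b+1) = c · P_−(a, b). -/
open Polynomial Finset

/-- Proctor's formula `P_|(a,b)` for vertically symmetric lozenge tilings of `H_{2a,b,b}`: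
`P_|(a,b) = ((a+1)_{b-1}/(2a+1)_{b-1}) · ∏_{1≤i≤j≤b-1} (2a+i+j-1)/(i+j-1)`. -/
noncomputable def Pvert (a : ℚ) (b : ℕ) : ℚ :=
  ((ascPochhammer ℚ (b - 1)).eval (a + 1) / (ascPochhammer ℚ (b - 1)).eval (2 * a + 1)) *
    ∏ j ∈ Finset.Icc 1 (b - 1), ∏ i ∈ Finset.Icc 1 j,
      (2 * a + (i : ℚ) + (j : ℚ) - 1) / ((i : ℚ) + (j : ℚ) - 1)

/-- The formula `P_-(a,b)` for horizontally symmetric lozenge tilings of `H_{2a,b,b}`: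
`P_-(a,b) = ((2a+1)_b/b!) · ∏_{1≤i<j≤b} (2a+i+j)/(i+j)`. -/
noncomputable def Phoriz (a : ℚ) (b : ℕ) : ℚ :=
  ((ascPochhammer ℚ b).eval (2 * a + 1) / (b.factorial : ℚ)) *
    ∏ j ∈ Finset.Icc 1 b, ∏ i ∈ Finset.Ico 1 j, (2 * a + (i : ℚ) + (j : ℚ)) / ((i : ℚ) + (j : ℚ))

/-! With `x = 2a`, `2^b (a + 1/2)_b = (x + 1)(x + 3)⋯(x + 2b - 1)`, so after clearing the
`a`-independent denominators the claim reduces to the polynomial identity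
`(x + 1)(x + 3)⋯(x + 2b - 1) · ∏_{0 ≤ i ≤ j < b} (x + i + j)`
  `= (x)_b (x + 1)_b ∏_{0 ≤ i < j < b} (x + i + j + 2)`,
which holds by induction on `b`: passing from `b` to `b + 1` multiplies both sides by
`(x + b)(x + b + 1)⋯(x + 2b + 1)`. -/

section CommSemiring

variable {R : Type*} [CommSemiring R]

def triangleProd (x : R) (b : ℕ) : R :=
  ∏ j ∈ range b, ∏ i ∈ range (j + 1), (x + i + j)

def strictTriangleProd (x : R) (b : ℕ) : R :=
  ∏ j ∈ range b, ∏ i ∈ range j, (x + i + j)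

theorem triangleProd_succ (x : R) (b : ℕ) :
    triangleProd x (b + 1) = triangleProd x b * ∏ i ∈ range (b + 1), (x + i + b) :=
  prod_range_succ _ _

theorem strictTriangleProd_succ (x : R) (b : ℕ) :
    strictTriangleProd x (b + 1) = strictTriangleProd x b * ∏ i ∈ range b, (x + i + b) :=
  prod_range_succ _ _

theorem triangleProd_pos {S : Type*} [CommSemiring S] [PartialOrder S] [IsStrictOrderedRing S]
    {x : S} (hx : 0 < x) (b : ℕ) : 0 < triangleProd x b :=
  prod_pos fun _ _ => prod_pos fun _ _ => by positivity

theorem strictTriangleProd_pos {S : Type*} [CommSemiring S] [PartialOrder S] [IsStrictOrderedRing S]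
    {x : S} (hx : 0 < x) (b : ℕ) : 0 < strictTriangleProd x b :=
  prod_pos fun _ _ => prod_pos fun _ _ => by positivity

theorem two_pow_mul_ascPochhammer_eval (y : R) (n : ℕ) :
    2 ^ n * (ascPochhammer R n).eval y = ∏ k ∈ range n, (2 * y + 2 * k) := by
  induction n with
  | zero => simp
  | succ n ih =>
    rw [ascPochhammer_succ_eval, prod_range_succ, ← ih, pow_succ]
    ring

theorem prod_odd_mul_triangleProd (x : R) (b : ℕ) :
    (∏ k ∈ range b, (x + 2 * k + 1)) * triangleProd x b =
      (ascPochhammer R b).eval x * (ascPochhammer R b).eval (x + 1) *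
        strictTriangleProd (x + 2) b := by
  induction b with
  | zero => simp [triangleProd, strictTriangleProd]
  | succ b ih =>
    have hlhs : (x + 2 * b + 1) * ∏ i ∈ range (b + 1), (x + i + b) =
        ∏ t ∈ range (b + 2), (x + t + b) := by
      rw [prod_range_succ _ (b + 1)]; push_cast; ring
    have hrhs : (x + b) * (x + 1 + b) * ∏ i ∈ range b, (x + 2 + i + b) =
        ∏ t ∈ range (b + 2), (x + t + b) := by
      rw [prod_range_succ', prod_range_succ']; push_cast; ring_nf
    rw [prod_range_succ, triangleProd_succ, strictTriangleProd_succ, ascPochhammer_succ_eval,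
      ascPochhammer_succ_eval]
    calc _ = ((∏ k ∈ range b, (x + 2 * k + 1)) * triangleProd x b) *
          ((x + 2 * b + 1) * ∏ i ∈ range (b + 1), (x + i + b)) := by ring
      _ = ((ascPochhammer R b).eval x * (ascPochhammer R b).eval (x + 1) *
            strictTriangleProd (x + 2) b) *
          ((x + b) * (x + 1 + b) * ∏ i ∈ range b, (x + 2 + i + b)) := by rw [ih, hlhs, hrhs]
      _ = _ := by ring

end CommSemiring

theorem Finset.prod_Icc_one_eq_prod_range {M : Type*} [CommMonoid M] (f : ℕ → M) (n : ℕ) :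
    ∏ k ∈ Icc 1 n, f k = ∏ k ∈ range n, f (k + 1) := by
  rw [← Ico_add_one_right_eq_Icc, prod_Ico_eq_prod_range, add_tsub_cancel_right]
  simp_rw [add_comm 1]

theorem Finset.prod_Ico_one_eq_prod_range {M : Type*} [CommMonoid M] (f : ℕ → M) (n : ℕ) :
    ∏ k ∈ Ico 1 n, f k = ∏ k ∈ range (n - 1), f (k + 1) := by
  rw [prod_Ico_eq_prod_range]
  simp_rw [add_comm 1]

theorem Pvert_sub_half_succ_eq_triangleProd (a : ℚ) (b : ℕ) :
    Pvert (a - 1 / 2) (b + 1) =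
      (ascPochhammer ℚ b).eval (a + 1 / 2) / (ascPochhammer ℚ b).eval (2 * a) *
        (triangleProd (2 * a) b / triangleProd 1 b) := by
  simp only [Pvert, triangleProd, Nat.add_sub_cancel, prod_Icc_one_eq_prod_range,
    ← prod_div_distrib]
  push_cast
  ring_nf

theorem Phoriz_eq_strictTriangleProd (a : ℚ) (b : ℕ) :
    Phoriz a b = (ascPochhammer ℚ b).eval (2 * a + 1) / b.factorial *
      (strictTriangleProd (2 * a + 2) b / strictTriangleProd 2 b) := by
  simp only [Phoriz, strictTriangleProd, prod_Icc_one_eq_prod_range, prod_Ico_one_eq_prod_range,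
    Nat.add_sub_cancel, ← prod_div_distrib]
  push_cast
  ring_nf

theorem Pvert_shift_eq_const_mul_Phoriz_general (b : ℕ) :
    ∃ c : ℚ, c ≠ 0 ∧ ∀ a : ℚ, (ascPochhammer ℚ b).eval (2 * a) ≠ 0 →
      Pvert (a - 1 / 2) (b + 1) = c * Phoriz a b := by
  have hT := triangleProd_pos (one_pos (α := ℚ)) b
  have hS := strictTriangleProd_pos (two_pos (α := ℚ)) b
  refine ⟨b.factorial * strictTriangleProd 2 b / (2 ^ b * triangleProd 1 b), by positivity,
    fun a ha => ?_⟩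
  have hodd : ∏ k ∈ range b, (2 * a + 2 * k + 1) =
      2 ^ b * (ascPochhammer ℚ b).eval (a + 1 / 2) := by
    rw [two_pow_mul_ascPochhammer_eval]
    exact prod_congr rfl fun k _ => by ring
  have key := prod_odd_mul_triangleProd (2 * a) b
  rw [hodd] at key
  rw [Pvert_sub_half_succ_eq_triangleProd, Phoriz_eq_strictTriangleProd, div_mul_div_comm,
    div_mul_div_comm, div_mul_div_comm,
    div_eq_div_iff (mul_ne_zero ha hT.ne') (by positivity)]
  linear_combination (b.factorial * strictTriangleProd 2 b * triangleProd 1 b) * key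

/-- for every `b ≥ 1` there is a nonzero rational constant `c`, depending
only on `b`, with `P_|(a - 1/2, b+1) = c · P_-(a, b)` for every rational `a` such that
`(2a)_b ≠ 0`. -/
theorem Pvert_shift_eq_const_mul_Phoriz (b : ℕ) (hb : 1 ≤ b) :
    ∃ c : ℚ, c ≠ 0 ∧ ∀ a : ℚ, (ascPochhammer ℚ b).eval (2 * a) ≠ 0 →
      Pvert (a - 1 / 2) (b + 1) = c * Phoriz a b :=
  Pvert_shift_eq_const_mul_Phoriz_general b
end

section
/- For every natural number b, the following identity of polynomials in x with rational coefficients holds: ∏_{1≤i≤j≤b} (x+i+j−2) · (x+1)_{2b} = ∏_{1≤i≤j≤b} (x+i+j) · (x)_b · (x+1)_b. Equivalently, as rational functions, ∏_{1≤i≤j≤b} (x+i+j−2)/(x+i+j) = (x)_b (x+1)_b / (x+1)_{2b}. -/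
open Polynomial Finset


lemma shift_col (c : ℚ) (n : ℕ) :
    (∏ i ∈ Finset.Icc 1 n, (X + Polynomial.C ((i : ℚ) + c))) * (X + Polynomial.C ((n : ℚ) + c + 1))
      = (X + Polynomial.C ((1 : ℚ) + c)) *
        ∏ i ∈ Finset.Icc 1 n, (X + Polynomial.C ((i : ℚ) + c + 1)) := by
  induction n with
  | zero => simp; ring_nf
  | succ n ih =>
    rw [Finset.prod_Icc_succ_top (Nat.le_add_left 1 n),
        Finset.prod_Icc_succ_top (Nat.le_add_left 1 n)]
    push_cast
    rw [show ((n:ℚ) + 1 + c) = (n + c + 1) by ring]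
    linear_combination (X + Polynomial.C ((n : ℚ) + c + 1 + 1)) * ih

lemma col_rel (b : ℕ) :
    (∏ i ∈ Finset.Icc 1 (b+1), (X + Polynomial.C ((i:ℚ) + ((b:ℚ)+1) - 2)))
        * (X + Polynomial.C (2*(b:ℚ)+1)) * (X + Polynomial.C (2*(b:ℚ)+2))
      = (∏ i ∈ Finset.Icc 1 (b+1), (X + Polynomial.C ((i:ℚ) + ((b:ℚ)+1))))
        * (X + Polynomial.C ((b:ℚ))) * (X + Polynomial.C ((b:ℚ)+1)) := by
  have h1 := shift_col ((b:ℚ)-1) (b+1)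
  have h2 := shift_col ((b:ℚ)) (b+1)
  have e1 : ∀ i:ℕ, (i:ℚ) + ((b:ℚ)-1) + 1 = (i:ℚ) + (b:ℚ) := fun i => by ring
  simp only [e1] at h1
  have e2 : ∀ i:ℕ, (i:ℚ) + (b:ℚ) + 1 = (i:ℚ) + ((b:ℚ)+1) := fun i => by ring
  simp only [e2] at h2
  have e0 : ∀ i:ℕ, (i:ℚ) + ((b:ℚ)+1) - 2 = (i:ℚ) + ((b:ℚ)-1) := fun i => by ring
  simp only [e0]
  push_cast at h1 h2
  rw [show (1:ℚ)+((b:ℚ)-1) = (b:ℚ) by ring] at h1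
  rw [show (1:ℚ)+(b:ℚ) = (b:ℚ)+1 by ring] at h2
  rw [show (2*(b:ℚ)+1) = (b:ℚ)+1+(b:ℚ) by ring,
      show (2*(b:ℚ)+2) = (b:ℚ)+1+((b:ℚ)+1) by ring]
  linear_combination (X + Polynomial.C ((b:ℚ)+1+((b:ℚ)+1))) * h1 + (X + Polynomial.C (b:ℚ)) * h2

lemma col_rel' (b : ℕ) :
    (∏ i ∈ Finset.Icc 1 (b+1), (X + Polynomial.C ((i:ℚ) + ((b+1:ℕ):ℚ) - 2)))
        * (X + Polynomial.C (((2*b:ℕ):ℚ)+1)) * (X + Polynomial.C (((2*b+1:ℕ):ℚ)+1))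
      = (∏ i ∈ Finset.Icc 1 (b+1), (X + Polynomial.C ((i:ℚ) + ((b+1:ℕ):ℚ))))
        * (X + ((b:ℕ) : ℚ[X])) * (X + Polynomial.C (((b:ℕ):ℚ)+1)) := by
  have h := col_rel b
  have eA : ∀ i:ℕ, (i:ℚ) + ((b:ℚ)+1) - 2 = (i:ℚ) + (((b+1:ℕ)):ℚ) - 2 := fun i => by push_cast; ring
  have eB : ∀ i:ℕ, (i:ℚ) + ((b:ℚ)+1) = (i:ℚ) + (((b+1:ℕ)):ℚ) := fun i => by push_cast; ring
  simp only [eA, eB] at h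
  rw [show (2*(b:ℚ)+1) = ((2*b:ℕ):ℚ)+1 by push_cast; ring,
      show (2*(b:ℚ)+2) = ((2*b+1:ℕ):ℚ)+1 by push_cast; ring,
      Polynomial.C_eq_natCast] at h
  exact h

lemma asc_comp (n : ℕ) :
    (ascPochhammer ℚ (n+1)).comp (X+1)
      = (ascPochhammer ℚ n).comp (X+1) * (X + Polynomial.C ((n:ℚ)+1)) := by
  rw [ascPochhammer_succ_right, mul_comp, add_comp, X_comp, natCast_comp]
  simp only [map_add, Polynomial.C_1, Polynomial.C_eq_natCast]
  ring


/-- the polynomial identity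
`∏_{1≤i≤j≤b} (x+i+j-2) · (x+1)_{2b} = ∏_{1≤i≤j≤b} (x+i+j) · (x)_b · (x+1)_b`
in `ℚ[x]`, where `(x)_m` is the ascending Pochhammer polynomial. -/
theorem shifted_product_pochhammer_identity (b : ℕ) :
    (∏ j ∈ Finset.Icc 1 b, ∏ i ∈ Finset.Icc 1 j,
        (X + Polynomial.C ((i : ℚ) + (j : ℚ) - 2))) *
      (ascPochhammer ℚ (2 * b)).comp (X + 1) =
    (∏ j ∈ Finset.Icc 1 b, ∏ i ∈ Finset.Icc 1 j,
        (X + Polynomial.C ((i : ℚ) + (j : ℚ)))) *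
      ascPochhammer ℚ b * (ascPochhammer ℚ b).comp (X + 1) := by
  induction b with
  | zero => simp
  | succ b ih =>
    rw [Finset.prod_Icc_succ_top
          (f := fun j => ∏ i ∈ Finset.Icc 1 j, (X + Polynomial.C ((i:ℚ) + (j:ℚ) - 2)))
          (Nat.le_add_left 1 b),
        Finset.prod_Icc_succ_top
          (f := fun j => ∏ i ∈ Finset.Icc 1 j, (X + Polynomial.C ((i:ℚ) + (j:ℚ))))
          (Nat.le_add_left 1 b),
        show 2*(b+1) = 2*b+1+1 from by ring,
        asc_comp (2*b+1), asc_comp (2*b), asc_comp b,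
        ascPochhammer_succ_right]
    have hcr := col_rel' b
    linear_combination ((∏ i ∈ Finset.Icc 1 (b+1), (X + Polynomial.C ((i:ℚ) + ((b+1:ℕ):ℚ) - 2)))
        * (X + Polynomial.C (((2*b:ℕ):ℚ)+1)) * (X + Polynomial.C (((2*b+1:ℕ):ℚ)+1))) * ih
      + ((∏ j ∈ Finset.Icc 1 b, ∏ i ∈ Finset.Icc 1 j, (X + Polynomial.C ((i : ℚ) + (j : ℚ)))) *
          ascPochhammer ℚ b * (ascPochhammer ℚ b).comp (X + 1)) * hcr
end

section
/- Fix natural numbers b, n and a strictly increasing sequence of integers u_1 < u_2 < ... < u_n with 1 ≤ u_i ≤ b+2n for all i; set u̲_i := b+n+i−u_i. Let σ be a permutation of {1, ..., b+n} such that for every i the polynomial entry M_{b,n,u}(a)[i, σ(i)] is not the zero polynomial (equivalently, K(i,σ(i)) ≥ 0 for every i). Then the product ∏_{i=1}^{b+n} M_{b,n,u}(a)[i, σ(i)] is a nonzero polynomial in a of degree exactly (b+n) + (b+n)(b+n−1)/2 − ∑_{i=1}^n u̲_i. -/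
open Polynomial Finset

/-- Generalized binomial coefficient `C(p, k) = (1/k!) · (p-k+1)_k` for `k ≥ 0` and
`C(p, k) = 0` for `k < 0`, as a polynomial in the (polynomial) argument `p`. -/
noncomputable def genBinomPoly (p : Polynomial ℚ) (k : ℤ) : Polynomial ℚ :=
  if 0 ≤ k then
    Polynomial.C ((k.toNat.factorial : ℚ))⁻¹ *
      (ascPochhammer ℚ k.toNat).comp (p - Polynomial.C ((k : ℤ) : ℚ) + 1)
  else 0

/-- The path matrix `M_{b,n,u}(a)` of the region `V⁺_{a,b,n,(u_i)}`, with entries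
polynomials in `a` (the variable `X`): the `(i,j)` entry (1-based) is `C(T(i,j), K(i,j))`,
where `T(i,j) = a+n+j`, `K(i,j) = 2j-1-b+i` if `1 ≤ i ≤ b`, and
`T(i,j) = a+u_{i-b}-b-n+j-1`, `K(i,j) = 2j-1-2b-2n+u_{i-b}` if `b+1 ≤ i ≤ b+n`.
The dent positions are `u 1, …, u n` (1-based). -/
noncomputable def MMatPoly (b n : ℕ) (u : ℕ → ℤ) :
    Matrix (Fin (b + n)) (Fin (b + n)) (Polynomial ℚ) := fun i j =>
  if ((i : ℕ) + 1 : ℤ) ≤ (b : ℤ) then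
    genBinomPoly (X + Polynomial.C ((n : ℚ) + (((j : ℕ) : ℚ) + 1)))
      (2 * (((j : ℕ) : ℤ) + 1) - 1 - (b : ℤ) + (((i : ℕ) : ℤ) + 1))
  else
    genBinomPoly
      (X + Polynomial.C (((u ((i : ℕ) + 1 - b) : ℤ) : ℚ) - (b : ℚ) - (n : ℚ) +
        (((j : ℕ) : ℚ) + 1) - 1))
      (2 * (((j : ℕ) : ℤ) + 1) - 1 - 2 * (b : ℤ) - 2 * (n : ℤ) + u ((i : ℕ) + 1 - b))

lemma genBinom_neg (c : ℚ) (k : ℤ) (hk : ¬ 0 ≤ k) : genBinomPoly (X + C c) k = 0 := by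
  simp [genBinomPoly, hk]

lemma genBinom_props (c : ℚ) (k : ℤ) (hk : 0 ≤ k) :
    genBinomPoly (X + C c) k ≠ 0 ∧ (genBinomPoly (X + C c) k).natDegree = k.toNat := by
  rw [genBinomPoly, if_pos hk]
  have hq : X + C c - C ((k : ℤ) : ℚ) + 1 = X + C (c - (k : ℚ) + 1) := by
    rw [C_add, C_sub, C_1]; ring
  rw [hq]
  have hC : (C ((k.toNat.factorial : ℚ))⁻¹ : Polynomial ℚ) ≠ 0 := by
    simp [Nat.factorial_ne_zero]
  have hP : ascPochhammer ℚ k.toNat ≠ 0 := (monic_ascPochhammer ℚ k.toNat).ne_zero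
  have hcomp : (ascPochhammer ℚ k.toNat).comp (X + C (c - (k : ℚ) + 1)) ≠ 0 := by
    rw [Ne, comp_eq_zero_iff]
    push_neg
    refine ⟨hP, fun _ h => ?_⟩
    have h1 : (X + C (c - (k : ℚ) + 1) : Polynomial ℚ).natDegree = 1 := natDegree_X_add_C _
    rw [h, natDegree_C] at h1
    exact one_ne_zero h1.symm
  constructor
  · exact mul_ne_zero hC hcomp
  · rw [natDegree_mul hC hcomp, natDegree_C, natDegree_comp, ascPochhammer_natDegree,
      natDegree_X_add_C, mul_one, zero_add]

lemma sum_odd (m : ℕ) : ∑ i ∈ Finset.range m, (2 * (i : ℤ) + 1) = (m : ℤ) * m := by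
  induction m with
  | zero => simp
  | succ k ih => rw [Finset.sum_range_succ, ih]; push_cast; ring

/-- for any permutation `σ` of `{1,…,b+n}` all of whose corresponding
entries of the path matrix `M_{b,n,u}` are nonzero polynomials, the permutation product
`∏_i M[i, σ(i)]` is a nonzero polynomial in `a` of degree exactly
`(b+n) + (b+n)(b+n-1)/2 - ∑_{i=1}^n u̲_i`, where `u̲_i = b+n+i-u_i`. -/
theorem path_matrix_permutation_product_degree (b n : ℕ) (u : ℕ → ℤ)
    (hmono : ∀ i j, 1 ≤ i → i < j → j ≤ n → u i < u j)
    (hlb : ∀ i, 1 ≤ i → i ≤ n → 1 ≤ u i)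
    (hub : ∀ i, 1 ≤ i → i ≤ n → u i ≤ (b : ℤ) + 2 * n)
    (σ : Equiv.Perm (Fin (b + n)))
    (hσ : ∀ i, MMatPoly b n u i (σ i) ≠ 0) :
    (∏ i, MMatPoly b n u i (σ i)) ≠ 0 ∧
      ((∏ i, MMatPoly b n u i (σ i)).natDegree : ℤ) =
        ((b : ℤ) + n) + ((b : ℤ) + n) * (((b : ℤ) + n) - 1) / 2 -
          ∑ i ∈ Finset.Icc 1 n, ((b : ℤ) + n + i - u i) := by
  classical
  set K : Fin (b + n) → ℤ := fun i =>
    if ((i : ℕ) + 1 : ℤ) ≤ (b : ℤ) then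
      2 * (((σ i : ℕ) : ℤ) + 1) - 1 - (b : ℤ) + (((i : ℕ) : ℤ) + 1)
    else
      2 * (((σ i : ℕ) : ℤ) + 1) - 1 - 2 * (b : ℤ) - 2 * (n : ℤ) + u ((i : ℕ) + 1 - b)
    with hKdef
  have hMi : ∀ i, ∃ c : ℚ, MMatPoly b n u i (σ i) = genBinomPoly (X + C c) (K i) := by
    intro i
    simp only [MMatPoly, hKdef]
    split
    · exact ⟨_, rfl⟩
    · exact ⟨_, rfl⟩
  have hK0 : ∀ i, 0 ≤ K i := by
    intro i
    by_contra h
    obtain ⟨c, hc⟩ := hMi i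
    exact hσ i (hc.trans (genBinom_neg c _ h))
  have hdeg : ∀ i, (MMatPoly b n u i (σ i)).natDegree = (K i).toNat := by
    intro i
    obtain ⟨c, hc⟩ := hMi i
    rw [hc, (genBinom_props c _ (hK0 i)).2]
  refine ⟨Finset.prod_ne_zero_iff.mpr fun i _ => hσ i, ?_⟩
  rw [Polynomial.natDegree_prod _ _ fun i _ => hσ i]
  have hcast : ((∑ i, (MMatPoly b n u i (σ i)).natDegree : ℕ) : ℤ) = ∑ i, K i := by
    push_cast
    refine Finset.sum_congr rfl fun i _ => ?_
    rw [hdeg i, Int.toNat_of_nonneg (hK0 i)]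
  rw [hcast]
  -- split K
  have hKsplit : ∀ i, K i = (2 * ((σ i : ℕ) : ℤ) + 1) +
      (if ((i : ℕ) + 1 : ℤ) ≤ (b : ℤ) then ((i : ℕ) : ℤ) + 1 - (b : ℤ)
       else u ((i : ℕ) + 1 - b) - 2 * (b : ℤ) - 2 * (n : ℤ)) := by
    intro i
    simp only [hKdef]
    split <;> ring
  rw [Finset.sum_congr rfl fun i _ => hKsplit i, Finset.sum_add_distrib]
  have h1 : ∑ i : Fin (b + n), (2 * ((σ i : ℕ) : ℤ) + 1) =
      ((b : ℤ) + n) * ((b : ℤ) + n) := by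
    rw [Equiv.sum_comp σ (fun j : Fin (b + n) => 2 * ((j : ℕ) : ℤ) + 1),
      Fin.sum_univ_eq_sum_range (fun i : ℕ => 2 * (i : ℤ) + 1), sum_odd]
    push_cast; ring
  rw [h1]
  have h2 : ∑ i : Fin (b + n),
      (if ((i : ℕ) + 1 : ℤ) ≤ (b : ℤ) then ((i : ℕ) : ℤ) + 1 - (b : ℤ)
       else u ((i : ℕ) + 1 - b) - 2 * (b : ℤ) - 2 * (n : ℤ)) =
      (∑ i ∈ Finset.range b, ((i : ℤ) + 1 - (b : ℤ))) +
      ((∑ i ∈ Finset.range n, u (i + 1)) - (n : ℤ) * (2 * (b : ℤ) + 2 * (n : ℤ))) := by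
    rw [Fin.sum_univ_eq_sum_range (fun i : ℕ =>
      if ((i : ℤ) + 1 : ℤ) ≤ (b : ℤ) then (i : ℤ) + 1 - (b : ℤ)
      else u (i + 1 - b) - 2 * (b : ℤ) - 2 * (n : ℤ)), Finset.sum_range_add]
    congr 1
    · refine Finset.sum_congr rfl fun i hi => ?_
      rw [if_pos]
      have := Finset.mem_range.mp hi
      omega
    · calc ∑ i ∈ Finset.range n,
            (if ((b + i : ℕ) : ℤ) + 1 ≤ (b : ℤ) then ((b + i : ℕ) : ℤ) + 1 - (b : ℤ)
             else u (b + i + 1 - b) - 2 * (b : ℤ) - 2 * (n : ℤ))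
          = ∑ i ∈ Finset.range n, (u (i + 1) - 2 * (b : ℤ) - 2 * (n : ℤ)) := by
            refine Finset.sum_congr rfl fun i _ => ?_
            rw [if_neg (by push_cast; omega)]
            have harg : b + i + 1 - b = i + 1 := by omega
            rw [harg]
        _ = (∑ i ∈ Finset.range n, u (i + 1)) - (n : ℤ) * (2 * (b : ℤ) + 2 * (n : ℤ)) := by
            rw [Finset.sum_sub_distrib, Finset.sum_sub_distrib, Finset.sum_const,
              Finset.sum_const, Finset.card_range, nsmul_eq_mul, nsmul_eq_mul]
            ring
  rw [h2]
  set U : ℤ := ∑ i ∈ Finset.range n, u (i + 1) with hU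
  set Q : ℤ := ∑ i ∈ Finset.Icc 1 n, ((b : ℤ) + n + i - u i) with hQ
  set Sb : ℤ := ∑ i ∈ Finset.range b, ((i : ℤ) + 1 - (b : ℤ)) with hSb
  have hSb2 : 2 * Sb = (b : ℤ) - (b : ℤ) * b := by
    rw [hSb, Finset.mul_sum]
    calc ∑ i ∈ Finset.range b, 2 * ((i : ℤ) + 1 - (b : ℤ))
        = ∑ i ∈ Finset.range b, ((2 * (i : ℤ) + 1) + (1 - 2 * (b : ℤ))) :=
          Finset.sum_congr rfl fun i _ => by ring
      _ = (b : ℤ) * b + (b : ℤ) * (1 - 2 * (b : ℤ)) := by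
          rw [Finset.sum_add_distrib, sum_odd, Finset.sum_const, Finset.card_range,
            nsmul_eq_mul]
      _ = (b : ℤ) - (b : ℤ) * b := by ring
  have hQ2 : 2 * Q = 2 * (n : ℤ) * ((b : ℤ) + n) + ((n : ℤ) * n + n) - 2 * U := by
    have hIcc : Q = ∑ i ∈ Finset.range n, ((b : ℤ) + n + ((i : ℤ) + 1) - u (1 + i)) := by
      rw [hQ, ← Finset.Ico_add_one_right_eq_Icc, Finset.sum_Ico_eq_sum_range]
      norm_num
      refine Finset.sum_congr rfl fun i _ => ?_
      push_cast
      ring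
    have huu : ∑ i ∈ Finset.range n, u (1 + i) = U := by
      rw [hU]
      exact Finset.sum_congr rfl fun i _ => by rw [Nat.add_comm]
    calc 2 * Q = ∑ i ∈ Finset.range n, ((2 * (i : ℤ) + 1) + (2 * ((b : ℤ) + n) + 1)
          - 2 * u (1 + i)) := by
          rw [hIcc, Finset.mul_sum]
          exact Finset.sum_congr rfl fun i _ => by ring
      _ = (n : ℤ) * n + (n : ℤ) * (2 * ((b : ℤ) + n) + 1) - 2 * U := by
          rw [Finset.sum_sub_distrib, Finset.sum_add_distrib, sum_odd, Finset.sum_const,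
            Finset.card_range, nsmul_eq_mul, ← huu, Finset.mul_sum]
      _ = 2 * (n : ℤ) * ((b : ℤ) + n) + ((n : ℤ) * n + n) - 2 * U := by ring
  have hD : 2 * (((b : ℤ) + n) * (((b : ℤ) + n) - 1) / 2) =
      ((b : ℤ) + n) * (((b : ℤ) + n) - 1) := by
    refine Int.mul_ediv_cancel' ?_
    have : Even ((((b : ℤ) + n) - 1) * ((((b : ℤ) + n) - 1) + 1)) :=
      Int.even_mul_succ_self _
    obtain ⟨r, hr⟩ := this
    exact ⟨r, by linarith [hr]⟩
  have h2goal : 2 * (((b : ℤ) + n) * ((b : ℤ) + n) + (Sb + (U - (n : ℤ) * (2 * (b : ℤ) + 2 * (n : ℤ))))) =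
      2 * (((b : ℤ) + n) + ((b : ℤ) + n) * (((b : ℤ) + n) - 1) / 2 - Q) := by
    linear_combination hSb2 - hD + hQ2
  linarith [h2goal]
end
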